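/- arXiv:2108.06260 — 2 statements merged into one kernel-verified Lean document; each statement's English description precedes it below -/
import Mathlib

section
/- For every nonnegative integer n, Bel_{n+1,λ}(1) = ∑_{m=0}^{n} C(n,m) · Bel_{m,λ}(1) · (1)_{n-m+1,λ}, where (1)_{j,λ} = 1·(1-λ)·(1-2λ)⋯(1-(j-1)λ). -/
open Finset
open scoped Nat

/-- Degenerate falling factorial `(x)_{n,λ}`. -/
noncomputable def degFall (lam x : ℝ) (n : ℕ) : ℝ := ∏ i ∈ Finset.range n, (x - i * lam)

/-- Degenerate Bell polynomial `Bel_{n,λ}(x) = e^{-x} ∑_{k≥0} (k)_{n,λ} x^k / k!`. -/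
noncomputable def Bel (lam x : ℝ) (n : ℕ) : ℝ :=
  Real.exp (-x) * ∑' k : ℕ, degFall lam (k : ℝ) n * x ^ k / (Nat.factorial k)

/-!
Since `(k)_{n+1,λ} = k (k - λ)_{n,λ}`, shifting the summation index turns the series of
`Bel_{n+1,λ}(x)` into `x ∑_k (k + (1 - λ))_{n,λ} x^k / k!`. The degenerate falling factorials
are of binomial type, `(a + b)_{n,λ} = ∑_m C(n,m) (a)_{m,λ} (b)_{n-m,λ}`, so this series splits
into the series of the `Bel_{m,λ}(x)`, weighted by `C(n,m) (1 - λ)_{n-m,λ} = C(n,m) (1)_{n-m+1,λ}`.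
This gives `Bel_{n+1,λ}(x) = x ∑_m C(n,m) Bel_{m,λ}(x) (1)_{n-m+1,λ}` for every `x`.
-/

lemma degFall_succ (lam x : ℝ) (n : ℕ) :
    degFall lam x (n + 1) = degFall lam x n * (x - n * lam) :=
  prod_range_succ _ _

lemma degFall_succ' (lam x : ℝ) (n : ℕ) :
    degFall lam x (n + 1) = x * degFall lam (x - lam) n := by
  rw [degFall, prod_range_succ', mul_comm]
  congr 1
  · simp
  · exact prod_congr rfl fun i _ => by push_cast; ring

theorem degFall_add (lam x y : ℝ) (n : ℕ) :
    degFall lam (x + y) n =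
      ∑ ij ∈ antidiagonal n, (n.choose ij.1 : ℝ) * (degFall lam x ij.1 * degFall lam y ij.2) := by
  induction n with
  | zero => simp [degFall]
  | succ n ih =>
    rw [sum_antidiagonal_choose_succ_mul (fun i j => degFall lam x i * degFall lam y j) n,
      ← sum_add_distrib, degFall_succ, ih, sum_mul]
    refine sum_congr rfl fun ij hij => ?_
    have hsum : ij.1 + ij.2 = n := mem_antidiagonal.mp hij
    have hchoose : (n.choose ij.2 : ℝ) = n.choose ij.1 := by rw [← hsum, Nat.choose_symm_add]
    have hcast : (n : ℝ) = ij.1 + ij.2 := by exact_mod_cast hsum.symm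
    rw [degFall_succ, degFall_succ, hchoose, hcast]
    ring

lemma abs_degFall_le (lam x : ℝ) (n : ℕ) : |degFall lam x n| ≤ (|x| + n * |lam|) ^ n := by
  calc |degFall lam x n| = ∏ i ∈ range n, |x - i * lam| := abs_prod _ _
    _ ≤ ∏ _i ∈ range n, (|x| + n * |lam|) := by
        refine prod_le_prod (fun _ _ => abs_nonneg _) fun i hi => ?_
        have hin : (i : ℝ) ≤ n := by exact_mod_cast (mem_range.1 hi).le
        calc |x - i * lam| ≤ |x| + |i * lam| := abs_sub _ _
          _ = |x| + i * |lam| := by rw [abs_mul, Nat.abs_cast]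
          _ ≤ |x| + n * |lam| := by gcongr
    _ = (|x| + n * |lam|) ^ n := by rw [prod_const, card_range]

lemma summable_degFall_mul_pow_div_factorial (lam x : ℝ) (n : ℕ) :
    Summable fun k : ℕ => degFall lam k n * x ^ k / k ! := by
  set c := 1 + n * |lam|
  refine Summable.of_norm_bounded
    ((Real.summable_pow_div_factorial (2 ^ n * |x|)).mul_left (c ^ n)) fun k => ?_
  -- `k + n|λ| ≤ (1 + n|λ|) 2^k` makes the terms geometric over `k!`.
  have hk : (k : ℝ) + n * |lam| ≤ c * 2 ^ k := by
    have h2k : (k : ℝ) + 1 ≤ 2 ^ k := by exact_mod_cast Nat.lt_two_pow_self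
    have : (0 : ℝ) ≤ n * |lam| := by positivity
    nlinarith
  have hdeg : |degFall lam k n| ≤ (c * 2 ^ k) ^ n := by
    refine (abs_degFall_le lam k n).trans (pow_le_pow_left₀ (by positivity) ?_ n)
    rwa [Nat.abs_cast]
  calc ‖degFall lam k n * x ^ k / (k !)‖ = |degFall lam k n| * |x| ^ k / k ! := by
        rw [Real.norm_eq_abs, abs_div, abs_mul, abs_pow, Nat.abs_cast]
    _ ≤ (c * 2 ^ k) ^ n * |x| ^ k / k ! := by gcongr
    _ = c ^ n * ((2 ^ n * |x|) ^ k / k !) := by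
        rw [mul_pow, mul_pow, ← pow_mul, ← pow_mul, mul_comm k n]; ring

lemma tsum_degFall_succ_mul_pow_div_factorial (lam x : ℝ) (n : ℕ) :
    ∑' k : ℕ, degFall lam k (n + 1) * x ^ k / k ! =
      x * ∑' k : ℕ, degFall lam (k + (1 - lam)) n * x ^ k / k ! := by
  rw [(summable_degFall_mul_pow_div_factorial lam x (n + 1)).tsum_eq_zero_add, ← tsum_mul_left]
  simp only [Nat.cast_zero, degFall_succ' lam 0, zero_mul, zero_div, zero_add]
  refine tsum_congr fun k => ?_
  rw [Nat.cast_succ, degFall_succ', Nat.factorial_succ, Nat.cast_mul, Nat.cast_succ, pow_succ,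
    show (k : ℝ) + 1 - lam = k + (1 - lam) by ring]
  field_simp

theorem tsum_degFall_add_mul_pow_div_factorial (lam x y : ℝ) (n : ℕ) :
    ∑' k : ℕ, degFall lam (k + y) n * x ^ k / k ! =
      ∑ m ∈ range (n + 1), (n.choose m : ℝ) * degFall lam y (n - m) *
        ∑' k : ℕ, degFall lam k m * x ^ k / k ! := by
  simp_rw [← tsum_mul_left]
  rw [← Summable.tsum_finsetSum fun m _ =>
    (summable_degFall_mul_pow_div_factorial lam x m).mul_left _]
  refine tsum_congr fun k => ?_
  rw [degFall_add, Nat.sum_antidiagonal_eq_sum_range_succ_mk, sum_mul, sum_div]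
  exact sum_congr rfl fun m _ => by ring

theorem Bel_succ (lam x : ℝ) (n : ℕ) :
    Bel lam x (n + 1) =
      x * ∑ m ∈ range (n + 1), (n.choose m : ℝ) * Bel lam x m * degFall lam 1 (n - m + 1) := by
  simp only [Bel, tsum_degFall_succ_mul_pow_div_factorial, tsum_degFall_add_mul_pow_div_factorial,
    degFall_succ' lam 1, one_mul, mul_sum]
  exact sum_congr rfl fun m _ => by ring

/-- recurrence for the degenerate Bell numbers. -/
theorem degenerate_bell_number_recurrence (lam : ℝ) (n : ℕ) :
    Bel lam 1 (n + 1) =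
      ∑ m ∈ range (n + 1), (n.choose m : ℝ) * Bel lam 1 m * degFall lam 1 (n - m + 1) :=
  (Bel_succ lam 1 n).trans (one_mul _)
end

section
/- For every nonnegative integer n and all real x, x^n = ∑_{k=0}^{n} (−1)^{n−k} · S_{1,λ}(n,k) · Bel_{k,λ}(x) · (−1)^{n−k}, i.e., x^n = ∑_{k=0}^{n} S_{1,λ}(n,k) · Bel_{k,λ}(x), exhibiting the inversion between the degenerate Stirling numbers of the first kind and the degenerate Bell polynomials. -/
open Finset

/-- Ordinary falling factorial `(x)_k`. -/
noncomputable def fall (x : ℝ) (k : ℕ) : ℝ := ∏ i ∈ Finset.range k, (x - i)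

/-!
Substituting the expansion of `(x)_{k,λ}` in falling factorials into that of `(x)_n` in degenerate
falling factorials writes `(x)_n` as `∑_j (∑_k S_{1,λ}(n,k) S_{2,λ}(k,j)) (x)_j`. The falling
factorials are linearly independent as functions (evaluate at `x = 0, 1, …`: `(j)_i = 0` for
`i > j`), so the matrix product `S_{1,λ} S_{2,λ}` is the identity, and the same reordering of the
double sum turns `∑_k S_{1,λ}(n,k) Bel_{k,λ}(x)` into `x^n`.
-/

lemma sum_range_mul_sum_range_eq_sum_Icc {R : Type*} [CommSemiring R] (n : ℕ) (a : ℕ → R)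
    (b : ℕ → ℕ → R) (f : ℕ → R) :
    ∑ k ∈ range (n + 1), a k * ∑ j ∈ range (k + 1), b k j * f j =
      ∑ j ∈ range (n + 1), (∑ k ∈ Icc j n, a k * b k j) * f j := by
  simp only [mul_sum, sum_mul, mul_assoc]
  exact sum_comm' fun k j => by simp only [mem_range, mem_Icc]; omega

lemma fall_natCast_eq_zero {j i : ℕ} (h : j < i) : fall j i = 0 :=
  prod_eq_zero (mem_range.mpr h) (sub_self _)

lemma fall_natCast_self_ne_zero (j : ℕ) : fall j j ≠ 0 :=
  prod_ne_zero_iff.mpr fun i hi => sub_ne_zero.mpr <| by exact_mod_cast (mem_range.mp hi).ne'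

lemma eq_zero_of_sum_mul_fall_eq_zero {m : ℕ} {c : ℕ → ℝ}
    (h : ∀ x, ∑ j ∈ range (m + 1), c j * fall x j = 0) {j : ℕ} (hj : j ≤ m) : c j = 0 := by
  induction j using Nat.strong_induction_on with
  | _ j ih =>
    have hsum : ∑ i ∈ range (m + 1), c i * fall j i = c j * fall j j := by
      refine sum_eq_single j (fun i _ hij => ?_) (fun hjm => absurd (mem_range.mpr (by omega)) hjm)
      rcases hij.lt_or_gt with hlt | hgt
      · rw [ih i hlt (by omega), zero_mul]
      · rw [fall_natCast_eq_zero hgt, mul_zero]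
    exact (mul_eq_zero.mp (hsum ▸ h j)).resolve_right (fall_natCast_self_ne_zero j)

lemma eq_of_sum_mul_fall_eq {m : ℕ} {c d : ℕ → ℝ}
    (h : ∀ x, ∑ j ∈ range (m + 1), c j * fall x j = ∑ j ∈ range (m + 1), d j * fall x j)
    {j : ℕ} (hj : j ≤ m) : c j = d j :=
  sub_eq_zero.mp <| eq_zero_of_sum_mul_fall_eq_zero (c := fun j => c j - d j)
    (fun x => by simp only [sub_mul, sum_sub_distrib, h, sub_self]) hj

lemma sum_Icc_mul_eq_ite_of_inverse {lam : ℝ} {S1 S2 : ℕ → ℕ → ℝ}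
    (hS1 : ∀ (n : ℕ) (x : ℝ), fall x n = ∑ k ∈ range (n + 1), S1 n k * degFall lam x k)
    (hS2 : ∀ (n : ℕ) (x : ℝ), degFall lam x n = ∑ k ∈ range (n + 1), S2 n k * fall x k)
    {n j : ℕ} (hj : j ≤ n) :
    ∑ k ∈ Icc j n, S1 n k * S2 k j = if j = n then 1 else 0 := by
  refine eq_of_sum_mul_fall_eq (c := fun j => ∑ k ∈ Icc j n, S1 n k * S2 k j)
    (d := fun j => if j = n then 1 else 0) (fun x => ?_) hj
  rw [← sum_range_mul_sum_range_eq_sum_Icc]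
  simp only [ite_mul, one_mul, zero_mul, sum_ite_eq', mem_range, Nat.lt_succ_self, if_true,
    ← hS2, ← hS1]

/-- `x^n = ∑_{k=0}^n S_{1,λ}(n,k) Bel_{k,λ}(x)`, where `S_{1,λ}` are the degenerate
Stirling numbers of the first kind and `Bel_{k,λ}(x) = ∑_{j=0}^k S_{2,λ}(k,j) x^j`. -/
theorem stirling_first_bell_inversion (lam : ℝ) (S1 S2 : ℕ → ℕ → ℝ)
    (hS1 : ∀ (n : ℕ) (x : ℝ), fall x n = ∑ k ∈ range (n + 1), S1 n k * degFall lam x k)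
    (hS2 : ∀ (n : ℕ) (x : ℝ), degFall lam x n = ∑ k ∈ range (n + 1), S2 n k * fall x k)
    (n : ℕ) (x : ℝ) :
    x ^ n = ∑ k ∈ range (n + 1),
      (-1 : ℝ) ^ (n - k) * S1 n k * (∑ j ∈ range (k + 1), S2 k j * x ^ j) *
        (-1 : ℝ) ^ (n - k) := by
  have hsign (k : ℕ) (a : ℝ) : (-1 : ℝ) ^ (n - k) * a * (-1) ^ (n - k) = a := by
    rw [mul_right_comm, ← pow_add, Even.neg_one_pow ⟨_, rfl⟩, one_mul]
  calc x ^ n = ∑ j ∈ range (n + 1), (if j = n then 1 else 0) * x ^ j := by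
        simp
    _ = ∑ j ∈ range (n + 1), (∑ k ∈ Icc j n, S1 n k * S2 k j) * x ^ j :=
        sum_congr rfl fun j hj => by
          rw [sum_Icc_mul_eq_ite_of_inverse hS1 hS2 (Nat.lt_succ_iff.mp (mem_range.mp hj))]
    _ = _ := by
        rw [← sum_range_mul_sum_range_eq_sum_Icc]
        simp only [mul_assoc, hsign]
end
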